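/- arXiv:1901.01509 — 2 statements merged into one kernel-verified Lean document; each statement's English description precedes it below -/
import Mathlib

section
/- Let $P_n$ be the path graph on $n \geq 2$ vertices and $S = K[x_1,\ldots,x_n]$. Then $\deg h(S/I(P_n), \lambda) = \lceil n/2 \rceil$ if $n \equiv 0, 2 \pmod 3$, and $\deg h(S/I(P_n), \lambda) = \lceil n/2 \rceil - 1$ if $n \equiv 1 \pmod 3$. -/
open MvPolynomial

/-- The edge ideal of a finite simple graph. -/
noncomputable def edgeIdeal (K : Type) [Field K] {V : Type} (G : SimpleGraph V) :
    Ideal (MvPolynomial V K) :=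
  Ideal.span {p | ∃ v w, G.Adj v w ∧ p = X v * X w}

/-- The Hilbert series of `S/I`, where `S = K[x_v : v ∈ σ]`:
the power series whose `d`-th coefficient is the `K`-dimension of the degree-`d`
graded piece of `S/I` (the image of the homogeneous polynomials of degree `d`). -/
noncomputable def hilbertSeries (K : Type) [Field K] {σ : Type} [Fintype σ]
    (I : Ideal (MvPolynomial σ K)) : PowerSeries ℚ :=
  PowerSeries.mk fun d =>
    (Module.finrank K ((MvPolynomial.homogeneousSubmodule σ K d).map
      (Ideal.Quotient.mkₐ K I).toLinearMap) : ℚ)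

/-!
The standard monomials of `I(G)`, those with independent support, form a basis of `S/I(G)`.
Counting them on the first `k` vertices of the path according to whether they involve the last of
these vertices (and then not its neighbour) gives `(1 - X) Hₖ₊₂ = (1 - X) Hₖ₊₁ + X Hₖ`, so
`hₖ = Hₖ (1 - X) ^ ⌈k/2⌉` is a polynomial obeying a recurrence from which `hₖ(1) > 0` is immediate.
For the degree, `hₖ₊₄ = (1 + X) hₖ₊₂ - X² hₖ`, so the coefficients of `X ^ ⌈k/2⌉` and
`X ^ (⌈k/2⌉ - 1)` in `hₖ` obey a linear recurrence: the first is `0` or `±1`, periodic up to sign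
with period 6, and vanishes exactly for `k ≡ 1 (mod 3)`, where the second is `±(k + 2)/3`.
-/

open Finset

section MonomialIdeal

variable {K : Type} [Field K] {σ : Type}

theorem finrank_map_homogeneousSubmodule_eq_card {I : Ideal (MvPolynomial σ K)}
    {P : (σ →₀ ℕ) → Prop} (hI : ∀ p, p ∈ I ↔ ∀ m ∈ p.support, ¬ P m) {d : ℕ}
    {B : Finset (σ →₀ ℕ)} (hB : ∀ m, m ∈ B ↔ m.degree = d ∧ P m) :
    Module.finrank K ((homogeneousSubmodule σ K d).map (Ideal.Quotient.mkₐ K I).toLinearMap) =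
      #B := by
  set f := (Ideal.Quotient.mkₐ K I).toLinearMap
  set W := restrictSupport K (B : Set (σ →₀ ℕ))
  have hker : ∀ p, f p = 0 ↔ p ∈ I := fun p => Ideal.Quotient.eq_zero_iff_mem
  have hmap : (homogeneousSubmodule σ K d).map f = W.map f := by
    have hW : W ≤ homogeneousSubmodule σ K d := by
      rw [homogeneousSubmodule_eq_finsupp_supported]
      exact restrictSupport_mono K fun m hm => ((hB m).1 hm).1
    refine le_antisymm ?_ (Submodule.map_mono hW)
    rw [homogeneousSubmodule_eq_finsupp_supported, ← restrictSupport, restrictSupport_eq_span,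
      Submodule.map_span, Submodule.span_le]
    rintro _ ⟨_, ⟨m, hm, rfl⟩, rfl⟩
    by_cases hPm : P m
    · exact ⟨_, (monomial_mem_restrictSupport K).2 (Or.inl ((hB m).2 ⟨hm, hPm⟩)), rfl⟩
    · have : f (monomial m 1) = 0 := (hker _).2 <| (hI _).2 fun m' hm' => by
        rwa [Finset.mem_singleton.1 (support_monomial_subset hm')]
      rw [SetLike.mem_coe, this]
      exact zero_mem _
  have hinj : Function.Injective (f ∘ₗ W.subtype) := by
    rw [← LinearMap.ker_eq_bot, Submodule.eq_bot_iff]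
    rintro ⟨p, hp⟩ hp0
    have hpI : p ∈ I := (hker p).1 hp0
    ext1
    simp only [Submodule.coe_zero, ← support_eq_empty, Finset.eq_empty_iff_forall_notMem]
    exact fun m hm => (hI p).1 hpI m hm ((hB m).1 (hp hm)).2
  rw [hmap, ← Submodule.range_subtype W, ← LinearMap.range_comp,
    LinearMap.finrank_range_of_inj hinj, Module.finrank_eq_card_basis (basisRestrictSupport K _)]
  simp

end MonomialIdeal

section EdgeIdeal

variable {V : Type}

theorem Finsupp.single_add_single_le_iff {v w : V} (hvw : v ≠ w) {m : V →₀ ℕ} :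
    Finsupp.single v 1 + Finsupp.single w 1 ≤ m ↔ m v ≠ 0 ∧ m w ≠ 0 := by
  classical
  rw [Finsupp.le_def]
  refine ⟨fun h => ⟨?_, ?_⟩, fun h i => ?_⟩
  · simpa [hvw, Nat.one_le_iff_ne_zero] using h v
  · simpa [hvw, Nat.one_le_iff_ne_zero] using h w
  · simp only [Finsupp.add_apply, Finsupp.single_apply]
    split_ifs <;> subst_vars <;> simp_all [Nat.one_le_iff_ne_zero]

variable {K : Type} [Field K] (G : SimpleGraph V)

theorem edgeIdeal_eq_span_monomial :
    edgeIdeal K G = Ideal.span ((fun m => monomial m (1 : K)) ''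
      {m | ∃ v w, G.Adj v w ∧ m = Finsupp.single v 1 + Finsupp.single w 1}) := by
  rw [edgeIdeal]
  congr 1
  ext p
  simp only [Set.mem_image, X, monomial_mul, mul_one]
  constructor
  · rintro ⟨v, w, hvw, rfl⟩
    exact ⟨_, ⟨v, w, hvw, rfl⟩, rfl⟩
  · rintro ⟨_, ⟨v, w, hvw, rfl⟩, rfl⟩
    exact ⟨v, w, hvw, rfl⟩

theorem mem_edgeIdeal_iff {p : MvPolynomial V K} :
    p ∈ edgeIdeal K G ↔ ∀ m ∈ p.support, ¬ G.IsIndepSet (m.support : Set V) := by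
  rw [edgeIdeal_eq_span_monomial, mem_ideal_span_monomial_image]
  refine forall₂_congr fun m _ => ?_
  simp only [SimpleGraph.isIndepSet_iff, Set.Pairwise, not_forall, not_not]
  constructor
  · rintro ⟨_, ⟨v, w, hvw, rfl⟩, hle⟩
    obtain ⟨hv, hw⟩ := (Finsupp.single_add_single_le_iff hvw.ne).1 hle
    exact ⟨v, by simpa using hv, w, by simpa using hw, hvw.ne, hvw⟩
  · rintro ⟨v, hv, w, hw, hne, hvw⟩
    exact ⟨_, ⟨v, w, hvw, rfl⟩,
      (Finsupp.single_add_single_le_iff hne).2 ⟨by simpa using hv, by simpa using hw⟩⟩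

end EdgeIdeal

section IndepMonomials

variable {V : Type} (G : SimpleGraph V)

open Classical in
noncomputable def indepMonomials (s : Finset V) (d : ℕ) : Finset (V →₀ ℕ) :=
  {m ∈ s.finsuppAntidiag d | G.IsIndepSet (m.support : Set V)}

noncomputable def indepMonomialSeries (s : Finset V) : PowerSeries ℚ :=
  PowerSeries.mk fun d => (#(indepMonomials G s d) : ℚ)

variable {G}

theorem mem_indepMonomials {s : Finset V} {d : ℕ} {m : V →₀ ℕ} :
    m ∈ indepMonomials G s d ↔
      m.support ⊆ s ∧ m.degree = d ∧ G.IsIndepSet (m.support : Set V) := by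
  classical
  simp only [indepMonomials, mem_filter, mem_finsuppAntidiag', Finsupp.degree_apply]
  tauto

theorem hilbertSeries_edgeIdeal (K : Type) [Field K] [Fintype V] :
    hilbertSeries K (edgeIdeal K G) = indepMonomialSeries G univ := by
  ext d
  rw [hilbertSeries, indepMonomialSeries, PowerSeries.coeff_mk, PowerSeries.coeff_mk,
    finrank_map_homogeneousSubmodule_eq_card (fun p => mem_edgeIdeal_iff G (K := K))]
  simp [mem_indepMonomials]

theorem indepMonomialSeries_empty : indepMonomialSeries G ∅ = 1 := by
  ext d
  have hmem : ∀ m, m ∈ indepMonomials G ∅ d ↔ m = 0 ∧ d = 0 := fun m => by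
    rw [mem_indepMonomials, subset_empty, Finsupp.support_eq_empty]
    constructor
    · rintro ⟨rfl, rfl, -⟩
      exact ⟨rfl, map_zero _⟩
    · rintro ⟨rfl, rfl⟩
      simp
  rw [indepMonomialSeries, PowerSeries.coeff_mk, PowerSeries.coeff_one]
  split_ifs with hd
  · rw [card_eq_one.2 ⟨0, Finset.ext fun m => (hmem m).trans (by simp [hd])⟩]
    simp
  · simp [card_eq_zero.2 (eq_empty_of_forall_notMem fun m hm => hd ((hmem m).1 hm).2)]

variable [DecidableEq V]

theorem indepMonomials_erase {s : Finset V} {v : V} {d : ℕ} :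
    indepMonomials G (s.erase v) d = {m ∈ indepMonomials G s d | m v = 0} := by
  ext m
  simp only [mem_filter, mem_indepMonomials, subset_erase, Finsupp.notMem_support_iff]
  tauto

open Classical in
/-- The bijection is division by `x_v`: a monomial with independent support that is divisible by
`x_v` vanishes on the neighbours of `v`. -/
theorem card_indepMonomials_succ_of_ne_zero {s : Finset V} {v : V} (hv : v ∈ s) (d : ℕ) :
    #{m ∈ indepMonomials G s (d + 1) | m v ≠ 0} =
      #(indepMonomials G {w ∈ s | ¬ G.Adj v w} d) := by
  have hle : ∀ m : V →₀ ℕ, Finsupp.single v 1 ≤ m ↔ m v ≠ 0 := fun m => by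
    rw [Finsupp.single_le_iff, Nat.one_le_iff_ne_zero]
  refine card_nbij' (· - Finsupp.single v 1) (· + Finsupp.single v 1) ?_ ?_ ?_ ?_
  · intro m hm
    simp only [coe_filter, mem_indepMonomials, mem_coe] at hm ⊢
    obtain ⟨⟨hs, hdeg, hind⟩, hmv⟩ := hm
    have hsupp : (m - Finsupp.single v 1).support ⊆ m.support := Finsupp.support_tsub
    refine ⟨fun w hw => mem_filter.2 ⟨hs (hsupp hw), fun hvw => ?_⟩, ?_, hind.mono (by simpa)⟩
    · exact hind (by simpa using hmv) (coe_subset.2 hsupp hw) hvw.ne hvw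
    · have h := congrArg Finsupp.degree (tsub_add_cancel_of_le ((hle m).2 hmv))
      rw [map_add, Finsupp.degree_single] at h
      omega
  · intro m hm
    simp only [coe_filter, mem_indepMonomials, mem_coe] at hm ⊢
    obtain ⟨hs, rfl, hind⟩ := hm
    have hsupp : (m + Finsupp.single v 1).support ⊆ insert v m.support := by
      intro w hw
      rcases mem_union.1 (Finsupp.support_add hw) with hw | hw
      · exact mem_insert_of_mem hw
      · rw [mem_singleton.1 (Finsupp.support_single_subset hw)]
        exact mem_insert_self v _
    refine ⟨⟨hsupp.trans (insert_subset hv fun w hw => (mem_filter.1 (hs hw)).1), by simp, ?_⟩,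
      by simp⟩
    refine Set.Pairwise.mono (coe_insert v _ ▸ coe_subset.2 hsupp) ?_
    refine Set.pairwise_insert.2 ⟨hind, fun w hw _ => ?_⟩
    have hvw := (mem_filter.1 (hs hw)).2
    exact ⟨hvw, fun h => hvw h.symm⟩
  · intro m hm
    exact tsub_add_cancel_of_le ((hle m).2 (mem_filter.1 hm).2)
  · intro m _
    exact add_tsub_cancel_right m _

open Classical in
theorem indepMonomialSeries_eq_erase_add {s : Finset V} {v : V} (hv : v ∈ s) :
    indepMonomialSeries G s = indepMonomialSeries G (s.erase v) +
      PowerSeries.X * indepMonomialSeries G {w ∈ s | ¬ G.Adj v w} := by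
  ext d
  rw [map_add, indepMonomialSeries, indepMonomialSeries, PowerSeries.coeff_mk,
    PowerSeries.coeff_mk, indepMonomials_erase,
    ← card_filter_add_card_filter_not (fun m : V →₀ ℕ => m v = 0), Nat.cast_add, add_right_inj]
  cases d with
  | zero =>
    rw [PowerSeries.coeff_zero_X_mul, Nat.cast_eq_zero, card_eq_zero, filter_eq_empty_iff]
    intro m hm
    rw [(Finsupp.degree_eq_zero_iff m).1 (mem_indepMonomials.1 hm).2.1]
    simp
  | succ d =>
    rw [PowerSeries.coeff_succ_X_mul, indepMonomialSeries, PowerSeries.coeff_mk,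
      card_indepMonomials_succ_of_ne_zero hv]

theorem one_sub_X_mul_indepMonomialSeries_insert {t : Finset V} {v : V} (hv : v ∉ t)
    (hadj : ∀ w ∈ t, ¬ G.Adj v w) :
    (1 - PowerSeries.X) * indepMonomialSeries G (insert v t) = indepMonomialSeries G t := by
  classical
  have h := indepMonomialSeries_eq_erase_add (G := G) (mem_insert_self v t)
  rw [erase_insert hv, filter_true_of_mem] at h
  · linear_combination h
  · intro w hw
    rcases mem_insert.1 hw with rfl | hw
    · exact G.irrefl
    · exact hadj w hw

end IndepMonomials

section Recurrence

variable {t s : ℕ → ℚ} (ht : ∀ j, t (j + 2) = t (j + 1) - t j)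
include ht

theorem apply_add_three_mul_of_rec (j i : ℕ) : t (j + 3 * i) = (-1) ^ i * t j := by
  induction i with
  | zero => simp
  | succ i ih =>
    have h₁ := ht (j + 3 * i + 1)
    have h₀ := ht (j + 3 * i)
    rw [show j + 3 * (i + 1) = j + 3 * i + 1 + 2 by ring]
    linear_combination h₁ + h₀ - ih

/-- `x = t + s ε` with `ε² = 0` satisfies `xⱼ₊₂ = (1 + ε) xⱼ₊₁ - xⱼ`; three steps multiply `x` by
`-1` up to an `ε`-correction, so `s` drifts linearly along `j, j + 3, j + 6, …`. -/
theorem apply_add_three_mul_of_rec_companion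
    (hs : ∀ j, s (j + 2) = s (j + 1) + t (j + 1) - s j) (j i : ℕ) :
    s (j + 3 * i) = (-1) ^ i * (s j + i * (t j - 2 * t (j + 1))) := by
  induction i with
  | zero => simp
  | succ i ih =>
    have h := apply_add_three_mul_of_rec ht (j + 1) i
    rw [show j + 1 + 3 * i = j + 3 * i + 1 by ring] at h
    have hs₁ := hs (j + 3 * i + 1)
    have hs₀ := hs (j + 3 * i)
    have ht₀ := ht (j + 3 * i)
    rw [show j + 3 * (i + 1) = j + 3 * i + 1 + 2 by ring, pow_succ]
    push_cast
    linear_combination hs₁ + hs₀ + ht₀ - ih + 2 * h - apply_add_three_mul_of_rec ht j i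

end Recurrence

section PathGraph

def pathSegment (n k : ℕ) : Finset (Fin n) := {i | (i : ℕ) < k}

@[simp]
theorem mem_pathSegment {n k : ℕ} {i : Fin n} : i ∈ pathSegment n k ↔ (i : ℕ) < k := by
  simp [pathSegment]

theorem pathSegment_zero (n : ℕ) : pathSegment n 0 = ∅ := by
  ext; simp

theorem pathSegment_self (n : ℕ) : pathSegment n n = univ := by
  ext i; simp

theorem one_sub_X_mul_indepMonomialSeries_pathSegment_one {n : ℕ} (hn : 1 ≤ n) :
    (1 - PowerSeries.X) * indepMonomialSeries (SimpleGraph.pathGraph n) (pathSegment n 1) = 1 := by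
  have : pathSegment n 1 = insert ⟨0, hn⟩ ∅ := by
    ext i; simp [Fin.ext_iff]
  rw [this, one_sub_X_mul_indepMonomialSeries_insert (notMem_empty _) (by simp),
    indepMonomialSeries_empty]

theorem indepMonomialSeries_pathSegment_add_two {n k : ℕ} (hk : k + 2 ≤ n) :
    (1 - PowerSeries.X) *
        indepMonomialSeries (SimpleGraph.pathGraph n) (pathSegment n (k + 2)) =
      (1 - PowerSeries.X) *
          indepMonomialSeries (SimpleGraph.pathGraph n) (pathSegment n (k + 1)) +
        PowerSeries.X * indepMonomialSeries (SimpleGraph.pathGraph n) (pathSegment n k) := by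
  classical
  set v : Fin n := ⟨k + 1, by omega⟩
  have hv : v ∈ pathSegment n (k + 2) := by simp [v]
  have herase : (pathSegment n (k + 2)).erase v = pathSegment n (k + 1) := by
    ext i; simp only [mem_erase, mem_pathSegment, ne_eq, Fin.ext_iff, v]; omega
  have hfilter : {w ∈ pathSegment n (k + 2) | ¬ (SimpleGraph.pathGraph n).Adj v w} =
      insert v (pathSegment n k) := by
    ext i
    simp only [mem_filter, mem_insert, mem_pathSegment, SimpleGraph.pathGraph_adj, Fin.ext_iff, v]
    omega
  have hinsert := one_sub_X_mul_indepMonomialSeries_insert (G := SimpleGraph.pathGraph n)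
    (t := pathSegment n k) (v := v) (by simp [v])
    (fun w hw => by
      simp only [mem_pathSegment, SimpleGraph.pathGraph_adj, v] at hw ⊢
      omega)
  rw [indepMonomialSeries_eq_erase_add hv, herase, hfilter]
  linear_combination PowerSeries.X * hinsert

/-- The recurrence is `(1 - X) Hₖ₊₂ = (1 - X) Hₖ₊₁ + X Hₖ` multiplied by `(1 - X) ^ ⌈k/2⌉`, using
`⌈k/2⌉ + 1 = k % 2 + ⌈(k+1)/2⌉`. -/
noncomputable def pathHPoly : ℕ → Polynomial ℚ
  | 0 => 1
  | 1 => 1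
  | k + 2 => (1 - Polynomial.X) ^ (k % 2) * pathHPoly (k + 1) + Polynomial.X * pathHPoly k

theorem indepMonomialSeries_pathSegment_mul_eq_pathHPoly {n k : ℕ} (hk : k ≤ n) :
    indepMonomialSeries (SimpleGraph.pathGraph n) (pathSegment n k) *
      (1 - PowerSeries.X) ^ ((k + 1) / 2) = (pathHPoly k : PowerSeries ℚ) := by
  induction k using Nat.twoStepInduction with
  | zero => simp [pathSegment_zero, indepMonomialSeries_empty, pathHPoly]
  | one =>
    rw [mul_comm, pow_one, one_sub_X_mul_indepMonomialSeries_pathSegment_one hk, pathHPoly,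
      Polynomial.coe_one]
  | more k ih₀ ih₁ =>
    set F := fun j => indepMonomialSeries (SimpleGraph.pathGraph n) (pathSegment n j)
    have hexp : (1 - PowerSeries.X : PowerSeries ℚ) ^ ((k + 1) / 2) * (1 - PowerSeries.X) =
        (1 - PowerSeries.X) ^ (k % 2) * (1 - PowerSeries.X) ^ ((k + 1 + 1) / 2) := by
      rw [← pow_succ, ← pow_add]
      congr 1
      omega
    calc F (k + 2) * (1 - PowerSeries.X) ^ ((k + 2 + 1) / 2)
        = (1 - PowerSeries.X) ^ ((k + 1) / 2) * ((1 - PowerSeries.X) * F (k + 2)) := by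
          rw [show (k + 2 + 1) / 2 = (k + 1) / 2 + 1 by omega]
          ring
      _ = (1 - PowerSeries.X) ^ (k % 2) * (F (k + 1) * (1 - PowerSeries.X) ^ ((k + 1 + 1) / 2)) +
            PowerSeries.X * (F k * (1 - PowerSeries.X) ^ ((k + 1) / 2)) := by
          rw [indepMonomialSeries_pathSegment_add_two hk]
          linear_combination F (k + 1) * hexp
      _ = (pathHPoly (k + 2) : PowerSeries ℚ) := by
        rw [ih₁ (by omega), ih₀ (by omega), pathHPoly]
        simp

end PathGraph

section PathHPoly

theorem pathHPoly_three : pathHPoly 3 = 1 + Polynomial.X - Polynomial.X ^ 2 := by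
  simp only [pathHPoly, Nat.mod_succ, pow_one, Nat.zero_mod, pow_zero, mul_one]
  ring

theorem pathHPoly_four : pathHPoly 4 = 1 + 2 * Polynomial.X := by
  simp only [pathHPoly, Nat.mod_self, pow_zero, Nat.mod_succ, pow_one, Nat.zero_mod, mul_one,
    one_mul]
  ring

theorem pathHPoly_add_four (k : ℕ) :
    pathHPoly (k + 4) =
      (1 + Polynomial.X) * pathHPoly (k + 2) - Polynomial.X ^ 2 * pathHPoly k := by
  have h₁ : (k + 1) % 2 = 1 - k % 2 := by omega
  have h₂ : (k + 2) % 2 = k % 2 := by omega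
  simp only [pathHPoly, h₁, h₂]
  rcases Nat.mod_two_eq_zero_or_one k with h | h <;> simp only [h] <;> ring

theorem natDegree_pathHPoly_le (k : ℕ) : (pathHPoly k).natDegree ≤ (k + 1) / 2 := by
  induction k using Nat.twoStepInduction with
  | zero => simp [pathHPoly]
  | one => simp [pathHPoly]
  | more k ih₀ ih₁ =>
    have h₁ : (1 - Polynomial.X : Polynomial ℚ).natDegree ≤ 1 := by compute_degree
    rw [pathHPoly]
    refine Polynomial.natDegree_add_le_of_degree_le ?_ ?_
    · refine (Polynomial.natDegree_mul_le_of_le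
        (Polynomial.natDegree_pow_le_of_le _ h₁) ih₁).trans ?_
      omega
    · refine (Polynomial.natDegree_mul_le_of_le Polynomial.natDegree_X_le ih₀).trans ?_
      omega

theorem eval_one_pathHPoly_pos (k : ℕ) : 0 < (pathHPoly k).eval 1 := by
  induction k using Nat.twoStepInduction with
  | zero => simp [pathHPoly]
  | one => simp [pathHPoly]
  | more k ih₀ ih₁ =>
    simp only [pathHPoly, Polynomial.eval_add, Polynomial.eval_mul, Polynomial.eval_pow,
      Polynomial.eval_sub, Polynomial.eval_one, Polynomial.eval_X, sub_self, one_mul]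
    exact add_pos_of_nonneg_of_pos (mul_nonneg (pow_nonneg le_rfl _) ih₁.le) ih₀

theorem coeff_pathHPoly_add_four (k m : ℕ) :
    (pathHPoly (k + 4)).coeff (m + 2) =
      (pathHPoly (k + 2)).coeff (m + 2) + (pathHPoly (k + 2)).coeff (m + 1) -
        (pathHPoly k).coeff m := by
  rw [pathHPoly_add_four, Polynomial.coeff_sub, add_mul, one_mul, Polynomial.coeff_add,
    Polynomial.coeff_X_mul, Polynomial.coeff_X_pow_mul']
  simp

noncomputable def pathHPolyTopCoeff (i k : ℕ) : ℚ := (pathHPoly k).coeff ((k + 1) / 2 - i)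

theorem pathHPolyTopCoeff_zero_add_four (k : ℕ) :
    pathHPolyTopCoeff 0 (k + 4) = pathHPolyTopCoeff 0 (k + 2) - pathHPolyTopCoeff 0 k := by
  have h := coeff_pathHPoly_add_four k ((k + 1) / 2)
  rw [Polynomial.coeff_eq_zero_of_natDegree_lt ((natDegree_pathHPoly_le (k + 2)).trans_lt
    (by omega)), zero_add] at h
  simp only [pathHPolyTopCoeff, Nat.sub_zero]
  rwa [show (k + 4 + 1) / 2 = (k + 1) / 2 + 2 by omega,
    show (k + 2 + 1) / 2 = (k + 1) / 2 + 1 by omega]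

theorem pathHPolyTopCoeff_one_add_four {k : ℕ} (hk : 1 ≤ k) :
    pathHPolyTopCoeff 1 (k + 4) =
      pathHPolyTopCoeff 1 (k + 2) + pathHPolyTopCoeff 0 (k + 2) - pathHPolyTopCoeff 1 k := by
  have h := coeff_pathHPoly_add_four k ((k + 1) / 2 - 1)
  simp only [pathHPolyTopCoeff, Nat.sub_zero]
  rw [show (k + 4 + 1) / 2 - 1 = (k + 1) / 2 - 1 + 2 by omega,
    show (k + 2 + 1) / 2 - 1 = (k + 1) / 2 - 1 + 1 by omega,
    show (k + 2 + 1) / 2 = (k + 1) / 2 - 1 + 2 by omega, h]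
  ring

theorem pathHPolyTopCoeff_zero_add_six_mul (c i : ℕ) :
    pathHPolyTopCoeff 0 (c + 6 * i) = (-1) ^ i * pathHPolyTopCoeff 0 c := by
  have h := apply_add_three_mul_of_rec (t := fun j => pathHPolyTopCoeff 0 (c + 2 * j))
    (fun j => by simpa [mul_add, add_assoc] using pathHPolyTopCoeff_zero_add_four (c + 2 * j)) 0 i
  simpa [← mul_assoc] using h

theorem pathHPolyTopCoeff_one_add_six_mul {c : ℕ} (hc : 1 ≤ c) (i : ℕ) :
    pathHPolyTopCoeff 1 (c + 6 * i) = (-1) ^ i * (pathHPolyTopCoeff 1 c +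
      i * (pathHPolyTopCoeff 0 c - 2 * pathHPolyTopCoeff 0 (c + 2))) := by
  have h := apply_add_three_mul_of_rec_companion
    (t := fun j => pathHPolyTopCoeff 0 (c + 2 * j)) (s := fun j => pathHPolyTopCoeff 1 (c + 2 * j))
    (fun j => by simpa [mul_add, add_assoc] using pathHPolyTopCoeff_zero_add_four (c + 2 * j))
    (fun j => by
      simpa [mul_add, add_assoc] using pathHPolyTopCoeff_one_add_four (k := c + 2 * j) (by omega))
    0 i
  simpa [← mul_assoc] using h

theorem pathHPolyTopCoeff_zero_three : pathHPolyTopCoeff 0 3 = -1 := by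
  simp [pathHPolyTopCoeff, pathHPoly_three, Polynomial.coeff_X, Polynomial.coeff_one]

theorem pathHPolyTopCoeff_zero_eq_zero_iff (k : ℕ) : pathHPolyTopCoeff 0 k = 0 ↔ k % 3 = 1 := by
  have h₀ : pathHPolyTopCoeff 0 0 = 1 := by simp [pathHPolyTopCoeff, pathHPoly]
  have h₁ : pathHPolyTopCoeff 0 1 = 0 := by
    simp [pathHPolyTopCoeff, pathHPoly, Polynomial.coeff_one]
  have h₂ : pathHPolyTopCoeff 0 2 = 1 := by
    simp [pathHPolyTopCoeff, pathHPoly, Polynomial.coeff_one]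
  have h₃ := pathHPolyTopCoeff_zero_three
  have h₄ : pathHPolyTopCoeff 0 4 = 0 := by
    rw [pathHPolyTopCoeff_zero_add_four 0, h₂, h₀, sub_self]
  have h₅ : pathHPolyTopCoeff 0 5 = -1 := by
    rw [pathHPolyTopCoeff_zero_add_four 1, h₃, h₁, sub_zero]
  obtain ⟨c, i, hc, rfl⟩ : ∃ c i, c < 6 ∧ k = c + 6 * i :=
    ⟨k % 6, k / 6, Nat.mod_lt _ (by norm_num), (Nat.mod_add_div k 6).symm⟩
  rw [pathHPolyTopCoeff_zero_add_six_mul, mul_eq_zero, or_iff_right (pow_ne_zero _ (by norm_num)),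
    show (c + 6 * i) % 3 = c % 3 by omega]
  interval_cases c <;> simp [h₀, h₁, h₂, h₃, h₄, h₅]

theorem pathHPolyTopCoeff_one_ne_zero {k : ℕ} (hk : k % 3 = 1) : pathHPolyTopCoeff 1 k ≠ 0 := by
  have h₁ := (pathHPolyTopCoeff_zero_eq_zero_iff 1).2 rfl
  have h₄ := (pathHPolyTopCoeff_zero_eq_zero_iff 4).2 rfl
  have h₃ := pathHPolyTopCoeff_zero_three
  have h₆ : pathHPolyTopCoeff 0 6 = -1 := by
    simpa [pathHPolyTopCoeff, pathHPoly] using pathHPolyTopCoeff_zero_add_six_mul 0 1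
  obtain ⟨c, i, hc, rfl⟩ : ∃ c i, (c = 1 ∨ c = 4) ∧ k = c + 6 * i :=
    ⟨k % 6, k / 6, by omega, (Nat.mod_add_div k 6).symm⟩
  rw [pathHPolyTopCoeff_one_add_six_mul (by omega)]
  refine mul_ne_zero (pow_ne_zero _ (by norm_num)) ?_
  rcases hc with rfl | rfl
  · have : pathHPolyTopCoeff 1 1 = 1 := by simp [pathHPolyTopCoeff, pathHPoly]
    rw [this, h₁, h₃]
    positivity
  · have : pathHPolyTopCoeff 1 4 = 2 := by
      simp [pathHPolyTopCoeff, pathHPoly_four, Polynomial.coeff_X, Polynomial.coeff_one]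
    rw [this, h₄, h₆]
    positivity

theorem natDegree_pathHPoly (k : ℕ) :
    (pathHPoly k).natDegree = if k % 3 = 1 then (k + 1) / 2 - 1 else (k + 1) / 2 := by
  split_ifs with hk
  · exact le_antisymm
      (Polynomial.natDegree_le_pred (natDegree_pathHPoly_le k)
        ((pathHPolyTopCoeff_zero_eq_zero_iff k).2 hk))
      (Polynomial.le_natDegree_of_ne_zero (pathHPolyTopCoeff_one_ne_zero hk))
  · exact Polynomial.natDegree_eq_of_le_of_coeff_ne_zero (natDegree_pathHPoly_le k)
      (mt (pathHPolyTopCoeff_zero_eq_zero_iff k).1 hk)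

end PathHPoly

theorem pathGraph_deg_h_general (K : Type) [Field K] (n : ℕ) :
    ∃ p : Polynomial ℚ,
      hilbertSeries K (edgeIdeal K (SimpleGraph.pathGraph n)) *
          (1 - PowerSeries.X) ^ ((n + 1) / 2) = (p : PowerSeries ℚ) ∧
      p.eval 1 ≠ 0 ∧
      p.natDegree = if n % 3 = 1 then (n + 1) / 2 - 1 else (n + 1) / 2 := by
  refine ⟨pathHPoly n, ?_, (eval_one_pathHPoly_pos n).ne', natDegree_pathHPoly n⟩
  rw [hilbertSeries_edgeIdeal, ← pathSegment_self]
  exact indepMonomialSeries_pathSegment_mul_eq_pathHPoly le_rfl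

/-- For the path graph `Pₙ` on `n ≥ 2` vertices, the degree of the `h`-polynomial of
`S/I(Pₙ)` equals `⌈n/2⌉` if `n ≡ 0, 2 (mod 3)` and `⌈n/2⌉ - 1` if `n ≡ 1 (mod 3)`.
(Here `dim S/I(Pₙ) = ⌈n/2⌉ = (n+1)/2` in natural-number division.) -/
theorem pathGraph_deg_h (K : Type) [Field K] (n : ℕ) (hn : 2 ≤ n) :
    ∃ p : Polynomial ℚ,
      hilbertSeries K (edgeIdeal K (SimpleGraph.pathGraph n)) *
          (1 - PowerSeries.X) ^ ((n + 1) / 2) = (p : PowerSeries ℚ) ∧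
      p.eval 1 ≠ 0 ∧
      p.natDegree = if n % 3 = 1 then (n + 1) / 2 - 1 else (n + 1) / 2 :=
  pathGraph_deg_h_general K n
end

section
/- Given integers $d, r, e$ with $d \geq r \geq e \geq 3$, there exists a Cameron--Walker graph $G$ whose maximum independent set has size $d$, whose matching number equals $r$, and whose minimum independent dominating set has size $e$. Concretely: for $d > r$, take $m = e-1$, $n = 2$, $s_1 = \cdots = s_{e-2} = 1$, $s_{e-1} = d-r$, $t_1 = r-e+1$, $t_2 = 0$, with bipartite edges $\{v_1, w_1\}$ and $\{v_i, w_2\}$ for all $i$; for $d = r$, take $m = e-1$, $n = 1$, all $s_i = 1$, $t_1 = d-e+1$. -/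
/-- Vertices of a Cameron–Walker graph with standard labeling: the `vᵢ`, the `wⱼ`,
the leaves `x^(i)_k` (`1 ≤ k ≤ sᵢ`), and the pendant-triangle vertices
`y^(j)_{ℓ,1}, y^(j)_{ℓ,2}` (`1 ≤ ℓ ≤ tⱼ`). -/
abbrev CWVert (m n : ℕ) (s : Fin m → ℕ) (t : Fin n → ℕ) : Type :=
  Fin m ⊕ Fin n ⊕ (Σ i : Fin m, Fin (s i)) ⊕ (Σ j : Fin n, Fin (t j) × Fin 2)

def cwRel (m n : ℕ) (s : Fin m → ℕ) (t : Fin n → ℕ) (B : Fin m → Fin n → Prop) :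
    CWVert m n s t → CWVert m n s t → Prop
  | Sum.inl i, Sum.inr (Sum.inl j) => B i j
  | Sum.inl i, Sum.inr (Sum.inr (Sum.inl ⟨i', _⟩)) => i = i'
  | Sum.inr (Sum.inl j), Sum.inr (Sum.inr (Sum.inr ⟨j', _, _⟩)) => j = j'
  | Sum.inr (Sum.inr (Sum.inr ⟨j, ℓ, _⟩)), Sum.inr (Sum.inr (Sum.inr ⟨j', ℓ', _⟩)) =>
      j = j' ∧ (ℓ : ℕ) = (ℓ' : ℕ)
  | _, _ => False

/-- The Cameron–Walker graph determined by the data `m, n, s, t, B`: a bipartite part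
on `{v₁,…,v_m} ∪ {w₁,…,w_n}` with edges given by `B`, `s i` leaf edges attached to `vᵢ`,
and `t j` pendant triangles attached to `wⱼ`. -/
def cwGraph (m n : ℕ) (s : Fin m → ℕ) (t : Fin n → ℕ) (B : Fin m → Fin n → Prop) :
    SimpleGraph (CWVert m n s t) :=
  SimpleGraph.fromRel (cwRel m n s t B)

/-- The bipartite part of the Cameron–Walker graph. -/
def bipGraph (m n : ℕ) (B : Fin m → Fin n → Prop) : SimpleGraph (Fin m ⊕ Fin n) :=
  SimpleGraph.fromRel fun a b =>
    match a, b with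
    | Sum.inl i, Sum.inr j => B i j
    | _, _ => False

/-- An independent dominating set: an independent set `A` with `A ∪ N_G(A) = V(G)`. -/
def IsIndepDomSet {V : Type} (G : SimpleGraph V) (A : Finset V) : Prop :=
  (∀ a ∈ A, ∀ b ∈ A, ¬ G.Adj a b) ∧ (∀ v, v ∈ A ∨ ∃ a ∈ A, G.Adj a v)

/-- `i(G)`: the minimum cardinality of an independent dominating set of `G`. -/
noncomputable def indepDomNumber {V : Type} (G : SimpleGraph V) : ℕ :=
  sInf {k | ∃ A : Finset V, IsIndepDomSet G A ∧ A.card = k}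

/-- The independence number: the maximum cardinality of an independent set of `G`. -/
noncomputable def indepNumber {V : Type} [Fintype V] (G : SimpleGraph V) : ℕ :=
  sSup {k | ∃ A : Finset V, (∀ a ∈ A, ∀ b ∈ A, ¬ G.Adj a b) ∧ A.card = k}

/-- The matching number: the maximum cardinality of a matching of `G`. -/
noncomputable def matchingNumber {V : Type} [Fintype V] (G : SimpleGraph V) : ℕ :=
  sSup {k | ∃ M : Finset (Sym2 V), (∀ e ∈ M, e ∈ G.edgeSet) ∧
    (∀ e ∈ M, ∀ e' ∈ M, e ≠ e' → ∀ v, v ∈ e → v ∉ e') ∧ M.card = k}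

/-!
Assume every `sᵢ ≥ 1`. The vertices split into `∑ sᵢ + ∑ max(tⱼ, 1)` cliques: `vᵢ` with its
first leaf, each other leaf alone, `wⱼ` with its first triangle (alone if `tⱼ = 0`), each other
triangle. One leaf per `vᵢ`, one vertex per triangle and the `wⱼ` with `tⱼ = 0` meet each of them
once and are independent, so `α(G) = ∑ sᵢ + ∑ max(tⱼ, 1)`. Likewise every edge lies in the star
at some `vᵢ` or in some pendant triangle; edges of one star or one triangle pairwise meet, and
`{vᵢ xᵢ₁} ∪ {yⱼ,ₗ₁ yⱼ,ₗ₂}` picks one from each, so `ν(G) = m + ∑ tⱼ`.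

A dominating set meets every `{vᵢ} ∪ {leaves of vᵢ}` (to dominate a leaf) and, for each `j`
with `tⱼ > 0`, the block of `wⱼ` and its triangles, so `i(G) ≥ m + 1` once some `tⱼ > 0`. In the
paper's two graphs `{w₁} ∪ {xᵢ₁}` resp. `{w₁, x₁₁} ∪ {v₂, …, v_m}` are independent dominating
sets of size `m + 1 = e`. Indices start at `0` in Lean.
-/

open Finset

section General
variable {V : Type} {G : SimpleGraph V}

theorem indepNumber_eq_card_of_cliqueCover [Fintype V] {K : Type} [Fintype K] (f : V → K)
    (g : K → V) (hf : ∀ a b, f a = f b → a = b ∨ G.Adj a b) (hfg : ∀ k, f (g k) = k)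
    (hg : ∀ k k', ¬ G.Adj (g k) (g k')) :
    indepNumber G = Fintype.card K := by
  classical
  refine IsGreatest.csSup_eq ⟨⟨univ.image g, ?_, ?_⟩, ?_⟩
  · simp only [mem_image, mem_univ, true_and]
    rintro _ ⟨k, rfl⟩ _ ⟨k', rfl⟩
    exact hg k k'
  · rw [card_image_of_injective _ (Function.LeftInverse.injective hfg), card_univ]
  · rintro _ ⟨A, hA, rfl⟩
    rw [← card_univ]
    exact card_le_card_of_injOn f (fun _ _ => mem_univ _)
      fun a ha b hb hab => (hf a b hab).resolve_right (hA a ha b hb)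

theorem matchingNumber_eq_card_of_intersectingCover [Fintype V] {L : Type} [Fintype L]
    (F : L → Set (Sym2 V)) (hcover : ∀ e ∈ G.edgeSet, ∃ ℓ, e ∈ F ℓ)
    (hF : ∀ ℓ, ∀ e ∈ F ℓ, ∀ e' ∈ F ℓ, ∃ u, u ∈ e ∧ u ∈ e')
    (g : L → Sym2 V) (hg : ∀ ℓ, g ℓ ∈ G.edgeSet)
    (hg_disj : ∀ ℓ ℓ' u, u ∈ g ℓ → u ∈ g ℓ' → ℓ = ℓ') :
    matchingNumber G = Fintype.card L := by
  classical
  have hg_inj : g.Injective := fun ℓ ℓ' h =>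
    hg_disj ℓ ℓ' _ (g ℓ).out_fst_mem (h ▸ (g ℓ).out_fst_mem)
  refine IsGreatest.csSup_eq ⟨⟨univ.image g, ?_, ?_, ?_⟩, ?_⟩
  · simp only [mem_image, mem_univ, true_and]
    rintro _ ⟨ℓ, rfl⟩
    exact hg ℓ
  · simp only [mem_image, mem_univ, true_and]
    rintro _ ⟨ℓ, rfl⟩ _ ⟨ℓ', rfl⟩ hne u hu hu'
    exact hne (congrArg g (hg_disj ℓ ℓ' u hu hu'))
  · rw [card_image_of_injective _ hg_inj, card_univ]
  · rintro _ ⟨M, hM, hM_disj, rfl⟩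
    choose ℓ hℓ using fun e he => hcover e (hM e he)
    rw [← Fintype.card_coe M]
    refine Fintype.card_le_of_injective (fun e => ℓ e e.2) fun e e' h => Subtype.ext ?_
    dsimp only at h
    by_contra hne
    obtain ⟨u, hu, hu'⟩ := hF _ e (hℓ e e.2) e' (h ▸ hℓ e' e'.2)
    exact hM_disj e e.2 e' e'.2 hne u hu hu'

theorem indepDomNumber_eq_card {A : Finset V} (hA : IsIndepDomSet G A)
    (hmin : ∀ A', IsIndepDomSet G A' → A.card ≤ A'.card) : indepDomNumber G = A.card :=
  IsLeast.csInf_eq ⟨⟨A, hA, rfl⟩, by rintro _ ⟨A', hA', rfl⟩; exact hmin A' hA'⟩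

end General

namespace CWVert
variable {m n : ℕ} {s : Fin m → ℕ} {t : Fin n → ℕ}

abbrev v (i : Fin m) : CWVert m n s t := .inl i
abbrev w (j : Fin n) : CWVert m n s t := .inr (.inl j)
abbrev x (i : Fin m) (k : Fin (s i)) : CWVert m n s t := .inr (.inr (.inl ⟨i, k⟩))
abbrev y (j : Fin n) (l : Fin (t j)) (c : Fin 2) : CWVert m n s t :=
  .inr (.inr (.inr ⟨j, l, c⟩))

def cliqueIndex (hs : ∀ i, 1 ≤ s i) :
    CWVert m n s t → (Σ i, Fin (s i)) ⊕ (Σ j, Fin (max (t j) 1))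
  | .inl i => .inl ⟨i, ⟨0, hs i⟩⟩
  | .inr (.inl j) => .inr ⟨j, ⟨0, by omega⟩⟩
  | .inr (.inr (.inl p)) => .inl p
  | .inr (.inr (.inr ⟨j, l, _⟩)) => .inr ⟨j, Fin.castLE (le_max_left _ _) l⟩

def cliqueRep : (Σ i, Fin (s i)) ⊕ (Σ j, Fin (max (t j) 1)) → CWVert m n s t
  | .inl ⟨i, k⟩ => x i k
  | .inr ⟨j, l⟩ => if h : (l : ℕ) < t j then y j ⟨l, h⟩ 0 else w j

def block : CWVert m n s t → Fin m ⊕ Fin n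
  | .inl i => .inl i
  | .inr (.inl j) => .inr j
  | .inr (.inr (.inl ⟨i, _⟩)) => .inl i
  | .inr (.inr (.inr ⟨j, _⟩)) => .inr j

def edgeClass : (Fin m ⊕ Σ j, Fin (t j)) → Set (Sym2 (CWVert m n s t))
  | .inl i => {e | v i ∈ e}
  | .inr ⟨j, l⟩ => {s(w j, y j l 0), s(w j, y j l 1), s(y j l 0, y j l 1)}

def matchEdge (hs : ∀ i, 1 ≤ s i) : (Fin m ⊕ Σ j, Fin (t j)) → Sym2 (CWVert m n s t)
  | .inl i => s(v i, x i ⟨0, hs i⟩)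
  | .inr ⟨j, l⟩ => s(y j l 0, y j l 1)

end CWVert

open CWVert

section CameronWalker
variable {m n : ℕ} {s : Fin m → ℕ} {t : Fin n → ℕ} {B : Fin m → Fin n → Prop}

theorem eq_or_adj_of_cliqueIndex_eq (hs : ∀ i, 1 ≤ s i) {a b : CWVert m n s t}
    (h : cliqueIndex hs a = cliqueIndex hs b) : a = b ∨ (cwGraph m n s t B).Adj a b := by
  rcases a with i | j | ⟨i, k⟩ | ⟨j, l, c⟩ <;> rcases b with i' | j' | ⟨i', k'⟩ | ⟨j', l', c'⟩ <;>
    simp [cliqueIndex, cwGraph, cwRel] at h ⊢ <;> obtain ⟨rfl, h⟩ := h <;>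
    simp_all [Fin.ext_iff, em]

theorem cliqueIndex_cliqueRep (hs : ∀ i, 1 ≤ s i)
    (k : (Σ i, Fin (s i)) ⊕ (Σ j, Fin (max (t j) 1))) :
    cliqueIndex hs (cliqueRep k : CWVert m n s t) = k := by
  rcases k with ⟨i, k⟩ | ⟨j, l⟩
  · rfl
  · simp only [cliqueRep]
    split_ifs with h
    · simp [cliqueIndex]
    · simp [cliqueIndex]
      omega

theorem not_adj_cliqueRep (k k' : (Σ i, Fin (s i)) ⊕ (Σ j, Fin (max (t j) 1))) :
    ¬ (cwGraph m n s t B).Adj (cliqueRep k) (cliqueRep k') := by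
  rcases k with ⟨i, k⟩ | ⟨j, l⟩ <;> rcases k' with ⟨i', k'⟩ | ⟨j', l'⟩ <;>
    simp only [cliqueRep] <;> (try split_ifs) <;> simp [cwGraph, cwRel]
  · intro h
    constructor <;> rintro rfl hl <;> exact h rfl (by simp [hl])
  · rintro rfl
    have := l'.isLt
    omega
  · rintro rfl
    have := l.isLt
    omega

theorem indepNumber_cwGraph (hs : ∀ i, 1 ≤ s i) :
    indepNumber (cwGraph m n s t B) = ∑ i, s i + ∑ j, max (t j) 1 := by
  rw [indepNumber_eq_card_of_cliqueCover (cliqueIndex hs) cliqueRep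
    (fun _ _ => eq_or_adj_of_cliqueIndex_eq hs) (cliqueIndex_cliqueRep hs) not_adj_cliqueRep]
  simp

theorem exists_mem_edgeClass {e : Sym2 (CWVert m n s t)}
    (he : e ∈ (cwGraph m n s t B).edgeSet) :
    ∃ ℓ, e ∈ edgeClass ℓ := by
  induction e using Sym2.ind with
  | _ a b =>
  rcases a with i | j | ⟨i, k⟩ | ⟨j, l, c⟩ <;> rcases b with i' | j' | ⟨i', k'⟩ | ⟨j', l', c'⟩ <;>
    simp [cwGraph, cwRel] at he
  any_goals first
    | exact ⟨.inl i, Sym2.mem_mk_left _ _⟩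
    | exact ⟨.inl i', Sym2.mem_mk_right _ _⟩
  · refine ⟨.inr ⟨j', l'⟩, ?_⟩
    subst he
    fin_cases c' <;> simp [edgeClass]
  · refine ⟨.inr ⟨j, l⟩, ?_⟩
    subst he
    fin_cases c <;> simp [edgeClass]
  · refine ⟨.inr ⟨j, l⟩, ?_⟩
    obtain ⟨hne, ⟨rfl, hl⟩ | ⟨rfl, hl⟩⟩ := he <;> obtain rfl := Fin.ext hl <;>
      fin_cases c <;> fin_cases c' <;> simp_all [edgeClass]

theorem exists_mem_and_mem_of_mem_edgeClass (ℓ : Fin m ⊕ Σ j, Fin (t j)) :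
    ∀ e ∈ (edgeClass ℓ : Set (Sym2 (CWVert m n s t))), ∀ e' ∈ edgeClass ℓ,
      ∃ u, u ∈ e ∧ u ∈ e' := by
  rcases ℓ with i | ⟨j, l⟩
  · exact fun e he e' he' => ⟨v i, he, he'⟩
  · simp only [edgeClass, Set.mem_insert_iff, Set.mem_singleton_iff]
    rintro _ (rfl | rfl | rfl) _ (rfl | rfl | rfl) <;> simp

theorem matchEdge_mem_edgeSet (hs : ∀ i, 1 ≤ s i) (ℓ : Fin m ⊕ Σ j, Fin (t j)) :
    matchEdge hs ℓ ∈ (cwGraph m n s t B).edgeSet := by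
  rcases ℓ with i | ⟨j, l⟩ <;> simp [matchEdge, cwGraph, cwRel]

theorem eq_of_mem_matchEdge (hs : ∀ i, 1 ≤ s i) {ℓ ℓ' : Fin m ⊕ Σ j, Fin (t j)}
    {u : CWVert m n s t} (hu : u ∈ matchEdge hs ℓ) (hu' : u ∈ matchEdge hs ℓ') : ℓ = ℓ' := by
  rcases ℓ with i | ⟨j, l⟩ <;> rcases ℓ' with i' | ⟨j', l'⟩ <;> simp [matchEdge] at hu hu' <;> aesop

theorem matchingNumber_cwGraph (hs : ∀ i, 1 ≤ s i) :
    matchingNumber (cwGraph m n s t B) = m + ∑ j, t j := by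
  rw [matchingNumber_eq_card_of_intersectingCover edgeClass (fun _ => exists_mem_edgeClass)
    exists_mem_and_mem_of_mem_edgeClass (matchEdge hs) (matchEdge_mem_edgeSet hs)
    fun _ _ _ => eq_of_mem_matchEdge hs]
  simp

theorem block_eq_of_adj_x {a : CWVert m n s t} {i : Fin m} {k : Fin (s i)}
    (h : (cwGraph m n s t B).Adj a (x i k)) : block a = .inl i := by
  rcases a with i' | j' | ⟨i', k'⟩ | ⟨j', l', c'⟩ <;> simp [cwGraph, cwRel, block] at h ⊢
  exact h

theorem block_eq_of_adj_y {a : CWVert m n s t} {j : Fin n} {l : Fin (t j)} {c : Fin 2}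
    (h : (cwGraph m n s t B).Adj a (y j l c)) : block a = .inr j := by
  rcases a with i' | j' | ⟨i', k'⟩ | ⟨j', l', c'⟩ <;> simp [cwGraph, cwRel, block] at h ⊢
  · exact h
  · exact h.2.elim And.left fun h => h.1.symm

theorem card_filter_add_card_filter_le_of_dominating {A : Finset (CWVert m n s t)}
    (hdom : ∀ a, a ∈ A ∨ ∃ b ∈ A, (cwGraph m n s t B).Adj b a) :
    #{i | s i ≠ 0} + #{j | t j ≠ 0} ≤ #A := by
  classical
  have hmeet : ∀ a, (∀ b, (cwGraph m n s t B).Adj b a → block b = block a) →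
      block a ∈ A.image block := fun a ha =>
    (hdom a).elim (mem_image_of_mem _) fun ⟨b, hb, hba⟩ => mem_image.2 ⟨b, hb, ha b hba⟩
  calc #{i | s i ≠ 0} + #{j | t j ≠ 0}
      = #((univ.filter fun i => s i ≠ 0).disjSum (univ.filter fun j => t j ≠ 0)) :=
        (card_disjSum ..).symm
    _ ≤ #(A.image block) := card_le_card ?_
    _ ≤ #A := card_image_le
  rintro (i | j) h <;> simp only [inl_mem_disjSum, inr_mem_disjSum, mem_filter] at h
  · exact hmeet (x i ⟨0, by omega⟩) fun b => block_eq_of_adj_x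
  · exact hmeet (y j ⟨0, by omega⟩ 0) fun b => block_eq_of_adj_y

theorem indepDomNumber_cwGraph_eq_of_card_eq (hs : ∀ i, 1 ≤ s i) {j : Fin n} (ht : t j ≠ 0)
    {A : Finset (CWVert m n s t)} (hA : IsIndepDomSet (cwGraph m n s t B) A)
    (hcard : #A = m + 1) :
    indepDomNumber (cwGraph m n s t B) = m + 1 := by
  rw [← hcard]
  refine indepDomNumber_eq_card hA fun A' hA' => ?_
  have hle := card_filter_add_card_filter_le_of_dominating hA'.2
  have hs' : #{i | s i ≠ 0} = m := by
    rw [filter_true_of_mem fun i _ => Nat.one_le_iff_ne_zero.1 (hs i), card_univ,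
      Fintype.card_fin]
  have ht' : 0 < #{j | t j ≠ 0} := card_pos.2 ⟨j, by simpa using ht⟩
  omega

theorem isIndepDomSet_cwGraph_one (m t : ℕ) :
    IsIndepDomSet (cwGraph m 1 (fun _ => 1) (fun _ => t) fun _ _ => True)
      (insert (w 0) (univ.image fun i => x i 0)) := by
  constructor
  · simp only [mem_insert, mem_image, mem_univ, true_and]
    rintro _ (rfl | ⟨i, rfl⟩) _ (rfl | ⟨i', rfl⟩) <;> simp [cwGraph, cwRel]
  · rintro (i | j | ⟨i, k⟩ | ⟨j, l, c⟩)
    · exact .inr ⟨w 0, by simp, by simp [cwGraph, cwRel]⟩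
    · exact .inl (by simp [Subsingleton.elim j 0])
    · exact .inl (mem_insert_of_mem (mem_image.2 ⟨i, mem_univ _, by rw [Subsingleton.elim k 0]⟩))
    · exact .inr ⟨w 0, by simp, by simp [cwGraph, cwRel, Subsingleton.elim j 0]⟩

theorem indepDomNumber_cwGraph_one {m t : ℕ} (ht : t ≠ 0) :
    indepDomNumber (cwGraph m 1 (fun _ => 1) (fun _ => t) fun _ _ => True) = m + 1 :=
  indepDomNumber_cwGraph_eq_of_card_eq (fun _ => le_rfl) (j := 0) ht
    (isIndepDomSet_cwGraph_one m t) <| by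
    rw [card_insert_of_notMem (by simp), card_image_of_injective _ fun i i' h => by simpa using h]
    simp

theorem isIndepDomSet_cwGraph_two {m : ℕ} {s : Fin (m + 2) → ℕ} (hs0 : s 0 = 1) (t₀ : ℕ) :
    IsIndepDomSet (cwGraph (m + 2) 2 s ![t₀, 0] fun i j => j = 1 ∨ i = 0)
      (insert (w 0) (insert (x 0 ⟨0, by omega⟩) ((univ.erase 0).image v))) := by
  constructor
  · simp only [mem_insert, mem_image, mem_erase, mem_univ, and_true]
    rintro _ (rfl | rfl | ⟨i, hi, rfl⟩) _ (rfl | rfl | ⟨i', hi', rfl⟩) <;>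
      simp [cwGraph, cwRel, *]
  · rintro (i | j | ⟨i, k⟩ | ⟨j, l, c⟩)
    · by_cases hi : i = 0
      · exact .inr ⟨w 0, by simp, by simp [cwGraph, cwRel, hi]⟩
      · exact .inl (by simp [hi])
    · fin_cases j
      · exact .inl (by simp)
      · exact .inr ⟨v 1, by simp, by simp [cwGraph, cwRel]⟩
    · by_cases hi : i = 0
      · subst hi
        obtain rfl : k = ⟨0, by omega⟩ := Fin.ext (by have := k.isLt; omega)
        exact .inl (by simp)
      · exact .inr ⟨v i, by simp [hi], by simp [cwGraph, cwRel]⟩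
    · fin_cases j
      · exact .inr ⟨w 0, by simp, by simp [cwGraph, cwRel]⟩
      · exact (Nat.not_lt_zero _ l.isLt).elim

theorem indepDomNumber_cwGraph_two {m : ℕ} {s : Fin (m + 2) → ℕ} (hs : ∀ i, 1 ≤ s i)
    (hs0 : s 0 = 1) {t₀ : ℕ} (ht₀ : t₀ ≠ 0) :
    indepDomNumber (cwGraph (m + 2) 2 s ![t₀, 0] fun i j => j = 1 ∨ i = 0) = m + 3 :=
  indepDomNumber_cwGraph_eq_of_card_eq hs (j := 0) ht₀ (isIndepDomSet_cwGraph_two hs0 t₀) <| by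
    rw [card_insert_of_notMem (by simp), card_insert_of_notMem (by simp),
      card_image_of_injective _ Sum.inl_injective]
    simp

theorem bipGraph_one_connected (m : ℕ) : (bipGraph m 1 fun _ _ => True).Connected := by
  refine (SimpleGraph.connected_iff_exists_forall_reachable _).2 ⟨.inr 0, ?_⟩
  rintro (i | j)
  · exact SimpleGraph.Adj.reachable (by simp [bipGraph])
  · rw [Subsingleton.elim j 0]

theorem bipGraph_two_connected (m : ℕ) :
    (bipGraph (m + 1) 2 fun i j => j = 1 ∨ i = 0).Connected := by
  have hadj : ∀ i j, j = 1 ∨ i = 0 →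
      (bipGraph (m + 1) 2 fun i j => j = 1 ∨ i = 0).Adj (.inr j) (.inl i) :=
    fun i j h => by simpa [bipGraph] using h
  refine (SimpleGraph.connected_iff_exists_forall_reachable _).2 ⟨.inr 1, ?_⟩
  rintro (i | j)
  · exact (hadj i 1 (.inl rfl)).reachable
  · fin_cases j
    · exact (hadj 0 1 (.inl rfl)).reachable.trans (hadj 0 0 (.inr rfl)).symm.reachable
    · rfl

end CameronWalker

/-- For integers `d ≥ r ≥ e ≥ 3` there exists a Cameron–Walker graph `G` whose maximum
independent set has size `d` (so `dim S/I(G) = deg h(S/I(G),λ) = d`), whose matching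
number equals `r` (so `reg S/I(G) = r`), and whose minimum independent dominating set
has size `e` (so `depth S/I(G) = e`). -/
theorem exists_cwGraph_dim_reg_depth (d r e : ℕ) (hdr : r ≤ d) (hre : e ≤ r)
    (he : 3 ≤ e) :
    ∃ (m n : ℕ) (s : Fin m → ℕ) (t : Fin n → ℕ) (B : Fin m → Fin n → Prop),
      1 ≤ m ∧ 1 ≤ n ∧ (∀ i, 1 ≤ s i) ∧ (bipGraph m n B).Connected ∧
      (2 ≤ m ∨ ∃ j, 0 < t j) ∧
      indepNumber (cwGraph m n s t B) = d ∧
      matchingNumber (cwGraph m n s t B) = r ∧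
      indepDomNumber (cwGraph m n s t B) = e := by
  obtain rfl | hrd := hdr.eq_or_lt
  · refine ⟨e - 1, 1, fun _ => 1, fun _ => r - e + 1, fun _ _ => True, by omega, le_rfl,
      fun _ => le_rfl, bipGraph_one_connected _, .inl (by omega), ?_, ?_, ?_⟩
    · rw [indepNumber_cwGraph fun _ => le_rfl]
      simp only [Fin.sum_const, smul_eq_mul]
      omega
    · rw [matchingNumber_cwGraph fun _ => le_rfl]
      simp only [Fin.sum_const, smul_eq_mul]
      omega
    · rw [indepDomNumber_cwGraph_one (by omega)]
      omega
  · set s : Fin (e - 3 + 2) → ℕ := fun i => if i = Fin.last _ then d - r else 1 with hs_def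
    have hs : ∀ i, 1 ≤ s i := fun i => by simp only [hs_def]; split_ifs <;> omega
    refine ⟨e - 3 + 2, 2, s, ![r - e + 1, 0], fun i j => j = 1 ∨ i = 0, by omega, by omega, hs,
      bipGraph_two_connected _, .inl (by omega), ?_, ?_, ?_⟩
    · rw [indepNumber_cwGraph hs, Fin.sum_univ_castSucc, Fin.sum_univ_two]
      simp only [hs_def, Fin.castSucc_ne_last, if_false, if_true, Fin.sum_const, smul_eq_mul,
        Matrix.cons_val_zero, Matrix.cons_val_one, Matrix.cons_val_fin_one]
      omega
    · rw [matchingNumber_cwGraph hs, Fin.sum_univ_two]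
      simp only [Matrix.cons_val_zero, Matrix.cons_val_one, Matrix.cons_val_fin_one]
      omega
    · rw [indepDomNumber_cwGraph_two hs (by simp [hs_def, Fin.ext_iff]) (by omega)]
      omega
end
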